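/- (Induced-demand paradox at a mixed-zone bottleneck; analytic core of Theorem 4(ii).) In the equally spaced piecewise linear setting, let μ > 0 and X₁ ≥ μd, and set λ = c̄₁(X₁, μ). If X₂ > 0 satisfies c̄₂(X₂, μ) = λ (the equilibrium commuting cost is unchanged when a second work start time t₂ = t₁ + d is introduced and demand adjusts), then X₂ = X₁ + μd, and the total commuting cost strictly increases: c̄₂(X₂, μ)·X₂ − c̄₁(X₁, μ)·X₁ = λ·μ·d > 0. -/
import Mathlib


open MeasureTheory

/-- Piecewise linear schedule delay cost with preferred arrival time `tk`. -/
noncomputable def sdc (β γ tk t : ℝ) : ℝ := if t < tk then β * (tk - t) else γ * (t - tk)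

/-- The `k`-th preferred arrival time `t_k = t₁ + (k-1)d`. -/
noncomputable def tpref (t₁ d : ℝ) (k : ℕ) : ℝ := t₁ + ((k : ℝ) - 1) * d

/-- The envelope `ĉ_K(t) = min_{1 ≤ k ≤ K} c_k(t)`. -/
noncomputable def env (β γ t₁ d : ℝ) (K : ℕ) (t : ℝ) : ℝ :=
  sInf ((fun k : ℕ => sdc β γ (tpref t₁ d k) t) '' Set.Icc 1 K)

/-- The sublevel set `Γ_K(c) = {t : ĉ_K(t) ≤ c}`. -/
noncomputable def Gam (β γ t₁ d : ℝ) (K : ℕ) (c : ℝ) : Set ℝ :=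
  {t : ℝ | env β γ t₁ d K t ≤ c}

/-- `IsCbar β γ t₁ d K X μ c` says that `c` is (a, hence the unique) value `c̄_K(X, μ)`:
`c ≥ 0` and `μ · Leb(Γ_K(c)) = X`. -/
noncomputable def IsCbar (β γ t₁ d : ℝ) (K : ℕ) (X μ c : ℝ) : Prop :=
  0 ≤ c ∧ μ * (volume (Gam β γ t₁ d K c)).toReal = X

lemma sdc_le_iff (β γ tk c : ℝ) (hβ : 0 < β) (hγ : 0 < γ) (hc : 0 ≤ c) (t : ℝ) :
    sdc β γ tk t ≤ c ↔ t ∈ Set.Icc (tk - c / β) (tk + c / γ) := by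
  have hb := div_nonneg hc hβ.le
  have hg := div_nonneg hc hγ.le
  unfold sdc
  rw [Set.mem_Icc]
  split_ifs with h
  · rw [← le_div_iff₀' hβ]
    constructor
    · intro h1; exact ⟨by linarith, by linarith⟩
    · intro ⟨h1, h2⟩; linarith
  · push_neg at h
    rw [← le_div_iff₀' hγ]
    constructor
    · intro h1; exact ⟨by linarith, by linarith⟩
    · intro ⟨h1, h2⟩; linarith

lemma env_one (β γ t₁ d t : ℝ) : env β γ t₁ d 1 t = sdc β γ t₁ t := by
  unfold env
  rw [Set.Icc_self, Set.image_singleton, csInf_singleton]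
  norm_num [tpref]

lemma env_two (β γ t₁ d t : ℝ) :
    env β γ t₁ d 2 t = min (sdc β γ t₁ t) (sdc β γ (t₁ + d) t) := by
  unfold env
  have h : Set.Icc (1 : ℕ) 2 = {1, 2} := by
    ext n; simp only [Set.mem_Icc, Set.mem_insert_iff, Set.mem_singleton_iff]; omega
  rw [h, Set.image_insert_eq, Set.image_singleton, csInf_pair]
  have h1 : tpref t₁ d 1 = t₁ := by norm_num [tpref]
  have h2 : tpref t₁ d 2 = t₁ + d := by norm_num [tpref]
  rw [h1, h2]

/-- Induced-demand paradox at a mixed-zone bottleneck (analytic core of Theorem 4(ii)):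
if `X₁ ≥ μd`, `λ = c̄₁(X₁, μ)`, and demand adjusts so that `c̄₂(X₂, μ) = λ` after a
second work start time `t₂ = t₁ + d` is introduced, then `X₂ = X₁ + μd` and the total
commuting cost strictly increases by `λ·μ·d > 0`. -/
theorem stmt17 (β γ : ℝ) (hβ : 0 < β) (hγ : 0 < γ)
    (d : ℝ) (hd : 0 < d) (t₁ : ℝ)
    (μ : ℝ) (hμ : 0 < μ) (X₁ : ℝ) (hX₁ : μ * d ≤ X₁)
    (lam : ℝ) (h₁ : IsCbar β γ t₁ d 1 X₁ μ lam)
    (X₂ : ℝ) (hX₂ : 0 < X₂) (h₂ : IsCbar β γ t₁ d 2 X₂ μ lam) :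
    X₂ = X₁ + μ * d ∧
    lam * X₂ - lam * X₁ = lam * μ * d ∧
    0 < lam * μ * d := by
  obtain ⟨hlam, hvol1⟩ := h₁
  obtain ⟨-, hvol2⟩ := h₂
  have hb := div_nonneg hlam hβ.le
  have hg := div_nonneg hlam hγ.le
  -- Γ₁
  have hG1 : Gam β γ t₁ d 1 lam = Set.Icc (t₁ - lam / β) (t₁ + lam / γ) := by
    ext t
    simp only [Gam, Set.mem_setOf_eq, env_one]
    exact sdc_le_iff β γ t₁ lam hβ hγ hlam t
  have hX1val : X₁ = μ * (lam / β + lam / γ) := by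
    rw [hG1] at hvol1
    rw [Real.volume_Icc] at hvol1
    rw [ENNReal.toReal_ofReal (by linarith)] at hvol1
    rw [← hvol1]; ring_nf
  -- overlap condition
  have hover : d ≤ lam / β + lam / γ := by
    have : μ * d ≤ μ * (lam / β + lam / γ) := by rw [← hX1val]; exact hX₁
    exact le_of_mul_le_mul_left this hμ
  -- Γ₂
  have hG2 : Gam β γ t₁ d 2 lam = Set.Icc (t₁ - lam / β) (t₁ + d + lam / γ) := by
    ext t
    simp only [Gam, Set.mem_setOf_eq, env_two, min_le_iff,
      sdc_le_iff β γ t₁ lam hβ hγ hlam t, sdc_le_iff β γ (t₁ + d) lam hβ hγ hlam t,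
      Set.mem_Icc]
    constructor
    · rintro (⟨h1, h2⟩ | ⟨h1, h2⟩) <;> constructor <;> linarith
    · rintro ⟨h1, h2⟩
      by_cases h : t ≤ t₁ + lam / γ
      · exact Or.inl ⟨h1, h⟩
      · push_neg at h
        exact Or.inr ⟨by linarith, by linarith⟩
  have hX2val : X₂ = μ * (lam / β + lam / γ + d) := by
    rw [hG2] at hvol2
    rw [Real.volume_Icc] at hvol2
    rw [ENNReal.toReal_ofReal (by linarith)] at hvol2
    rw [← hvol2]; ring_nf
  have hX2eq : X₂ = X₁ + μ * d := by rw [hX2val, hX1val]; ring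
  have hlampos : 0 < lam := by
    rcases lt_or_eq_of_le hlam with h | h
    · exact h
    · exfalso
      have : X₁ = 0 := by rw [hX1val, ← h]; ring
      nlinarith
  exact ⟨hX2eq, by rw [hX2eq]; ring, by positivity⟩
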